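/- arXiv:1907.10231 — 3 statements merged into one kernel-verified Lean document; each statement's English description precedes it below -/
import Mathlib

section
/- Fix m, n ∈ ℕ and smooth generalized Christoffel symbols Γ^α_μ : ℝ^m × ℝ^n → ℝ. For each μ ∈ Fin m define the horizontal lift vector field V_μ : ℝ^m × ℝ^n → ℝ^m × ℝ^n by V_μ(x,v) := (e_μ, −Γ_μ(x,v)), where e_μ is the μ-th standard basis vector of ℝ^m and Γ_μ(x,v) ∈ ℝ^n has components Γ^α_μ(x,v). Then the Lie bracket of vector fields satisfies, for all μ, ν ∈ Fin m and all (x,v): [V_μ, V_ν](x,v) = (0, −R_{μν}(x,v)), where R_{μν}(x,v) ∈ ℝ^n has components R^α_{μν}(x,v). In particular the bracket of two horizontal lifts is vertical and equals minus the curvature. -/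
open scoped BigOperators

/-- **The bracket of two horizontal lifts is vertical and equals minus the curvature.**
For smooth generalized Christoffel symbols `Γ^α_μ : ℝ^m × ℝ^n → ℝ`, define horizontal lift
vector fields `V_μ (x, v) = (e_μ, −Γ_μ (x, v))` on `ℝ^m × ℝ^n`, and curvature coefficients
`R^α_{μν} = ∂Γ^α_ν/∂x^μ − ∂Γ^α_μ/∂x^ν + Σ_β (Γ^β_ν ∂Γ^α_μ/∂v^β − Γ^β_μ ∂Γ^α_ν/∂v^β)`.
Then the Lie bracket `[V_μ, V_ν] (p) = (DV_ν) (p) (V_μ p) − (DV_μ) (p) (V_ν p)` equals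
`(0, −R_{μν} (p))` at every point `p`. -/
theorem bracket_of_horizontal_lifts_eq_neg_curvature
    (m n : ℕ)
    (Γ : Fin m → Fin n → ((Fin m → ℝ) × (Fin n → ℝ)) → ℝ)
    (hΓ : ∀ μ α, ContDiff ℝ (⊤ : ℕ∞) (Γ μ α))
    (V : Fin m → ((Fin m → ℝ) × (Fin n → ℝ)) → ((Fin m → ℝ) × (Fin n → ℝ)))
    (hV : ∀ μ p, V μ p = (Pi.single μ 1, fun α => -(Γ μ α p)))
    (R : Fin m → Fin m → Fin n → ((Fin m → ℝ) × (Fin n → ℝ)) → ℝ)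
    (hR : ∀ μ ν α p, R μ ν α p
      = fderiv ℝ (Γ ν α) p (Pi.single μ 1, 0) - fderiv ℝ (Γ μ α) p (Pi.single ν 1, 0)
        + ∑ β, (Γ ν β p * fderiv ℝ (Γ μ α) p (0, Pi.single β 1)
              - Γ μ β p * fderiv ℝ (Γ ν α) p (0, Pi.single β 1))) :
    ∀ (μ ν : Fin m) (p : (Fin m → ℝ) × (Fin n → ℝ)),
      fderiv ℝ (V ν) p (V μ p) - fderiv ℝ (V μ) p (V ν p)
        = (0, fun α => -(R μ ν α p)) := by
  intro μ ν p
  have hVf : ∀ μ', V μ' = fun q => ((Pi.single μ' 1 : Fin m → ℝ), fun α => -(Γ μ' α q)) :=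
    fun μ' => funext (hV μ')
  have hdiff : ∀ μ' α, DifferentiableAt ℝ (Γ μ' α) p :=
    fun μ' α => ((hΓ μ' α).differentiable (by simp)).differentiableAt
  have hDV : ∀ μ', HasFDerivAt (V μ')
      ((0 : ((Fin m → ℝ) × (Fin n → ℝ)) →L[ℝ] (Fin m → ℝ)).prod
        (ContinuousLinearMap.pi fun α => -(fderiv ℝ (Γ μ' α) p))) p := by
    intro μ'
    rw [hVf μ']
    exact HasFDerivAt.prodMk (hasFDerivAt_const _ _)
      (hasFDerivAt_pi.2 fun α => ((hdiff μ' α).hasFDerivAt).neg)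
  have key : ∀ μ' w, fderiv ℝ (V μ') p w
      = ((0 : Fin m → ℝ), fun α => -(fderiv ℝ (Γ μ' α) p w)) := by
    intro μ' w
    rw [(hDV μ').fderiv]
    rfl
  have hsplit : ∀ μ' : Fin m,
      (((Pi.single μ' 1 : Fin m → ℝ), fun β => -(Γ μ' β p)) :
        (Fin m → ℝ) × (Fin n → ℝ))
      = ((Pi.single μ' 1 : Fin m → ℝ), (0 : Fin n → ℝ))
        + ∑ β, (-(Γ μ' β p)) • (((0 : Fin m → ℝ), (Pi.single β 1 : Fin n → ℝ)) :
            (Fin m → ℝ) × (Fin n → ℝ)) := by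
    intro μ'
    refine Prod.ext ?_ ?_
    · simp [Prod.fst_sum]
    · funext γ
      simp [Prod.snd_sum, Finset.sum_apply, Pi.single_apply, mul_ite]
  have expand : ∀ (α : Fin n) (μ' ν' : Fin m),
      fderiv ℝ (Γ ν' α) p ((Pi.single μ' 1 : Fin m → ℝ), fun β => -(Γ μ' β p))
      = fderiv ℝ (Γ ν' α) p ((Pi.single μ' 1 : Fin m → ℝ), 0)
        + ∑ β, (-(Γ μ' β p)) * fderiv ℝ (Γ ν' α) p ((0 : Fin m → ℝ), Pi.single β 1) := by
    intro α μ' ν'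
    rw [hsplit μ', map_add, map_sum]
    simp only [map_smul, smul_eq_mul]
  rw [hV μ, hV ν, key, key]
  refine Prod.ext ?_ ?_
  · simp
  · funext α
    simp only [Prod.snd_sub, Pi.sub_apply]
    rw [expand α μ ν, expand α ν μ, hR, Finset.sum_sub_distrib]
    simp only [neg_mul, Finset.sum_neg_distrib]
    abel
end

section
/- Let A be a complete unital normed ℝ-algebra (a Banach algebra) and let X, Y, Z ∈ A. Define f, g : ℝ × ℝ → A by f(t,ε) := exp(t•X) * exp(ε•(Y + t•Z)) and g(t,ε) := exp(t•X + ε•Y + (t·ε)•(Z + (1/2)•(X*Y − Y*X))). Then f(t,ε) − g(t,ε) = O(‖(t,ε)‖³) as (t,ε) → (0,0); equivalently, the values, all first-order partial derivatives and all second-order partial derivatives of f and g at (0,0) coincide. -/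
/-!
Expand every exponential to second order, `exp u = 1 + u + ½ u² + O(‖u‖³)`. All exponents are
`O(‖(t, ε)‖)`, so the remainders are `O(‖(t, ε)‖³)`, and what is left is the difference of two
second-order Taylor polynomials: a polynomial in `t, ε` whose terms of degree at most two cancel,
the mixed term `t ε` precisely because of the correction `½ [X, Y]`.
-/

open scoped Topology
open Asymptotics NormedSpace Filter

section ExpTaylor

variable {A : Type*} [NormedRing A] [NormedAlgebra ℝ A]

noncomputable def expTaylorTwo (u : A) : A := 1 + u + (1 / 2 : ℝ) • (u * u)

noncomputable def expMulExpTaylorTwo (u v : A) : A :=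
  1 + u + v + u * v + (1 / 2 : ℝ) • (u * u) + (1 / 2 : ℝ) • (v * v)

lemma expTaylorTwo_eq_partialSum (u : A) :
    expTaylorTwo u = (expSeries ℝ A).partialSum 3 u := by
  simp [expTaylorTwo, FormalMultilinearSeries.partialSum, Finset.sum_range_succ,
    expSeries_apply_eq, Nat.factorial, pow_succ]

lemma expTaylorTwo_mul_expTaylorTwo (u v : A) :
    expTaylorTwo u * expTaylorTwo v
      = expMulExpTaylorTwo u v
        + ((1 / 2 : ℝ) • (u * (v * v)) + (1 / 2 : ℝ) • (u * (u * v))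
          + (1 / 4 : ℝ) • (u * (u * (v * v)))) := by
  simp only [expTaylorTwo, expMulExpTaylorTwo, mul_add, add_mul, smul_mul_assoc, mul_smul_comm,
    one_mul, mul_one, mul_assoc]
  match_scalars <;> ring

lemma exists_expMulExpTaylorTwo_sub_expTaylorTwo_eq (X Y Z : A) :
    ∃ C₁ C₂ C₃ : A, ∀ t ε : ℝ,
      expMulExpTaylorTwo (t • X) (ε • (Y + t • Z))
          - expTaylorTwo (t • X + ε • Y + (t * ε) • (Z + (1 / 2 : ℝ) • (X * Y - Y * X)))
        = (t ^ 2 * ε) • C₁ + (t * ε ^ 2) • C₂ + (t ^ 2 * ε ^ 2) • C₃ := by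
  set W := Z + (1 / 2 : ℝ) • (X * Y - Y * X) with hW
  refine ⟨X * Z - (1 / 2 : ℝ) • (X * W + W * X), (1 / 2 : ℝ) • (Y * Z + Z * Y - Y * W - W * Y),
    (1 / 2 : ℝ) • (Z * Z - W * W), fun t ε => ?_⟩
  simp only [expMulExpTaylorTwo, expTaylorTwo, hW, mul_add, add_mul, sub_mul, mul_sub,
    smul_mul_assoc, mul_smul_comm, smul_smul, smul_add, smul_sub]
  match_scalars <;> ring

variable [CompleteSpace A]

lemma isBigO_exp_sub_expTaylorTwo :
    (fun u : A => exp u - expTaylorTwo u) =O[𝓝 0] fun u => ‖u‖ ^ 3 := by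
  simpa [expTaylorTwo_eq_partialSum] using
    (exp_hasFPowerSeriesAt_zero (𝕂 := ℝ) (𝔸 := A)).isBigO_sub_partialSum_pow 3

variable {α : Type*} {l : Filter α} {g : α → ℝ} {u v : α → A}

lemma Asymptotics.IsBigO.exp_sub_expTaylorTwo (hg : Tendsto g l (𝓝 0)) (hu : u =O[l] g) :
    (fun x => exp (u x) - expTaylorTwo (u x)) =O[l] fun x => g x ^ 3 :=
  (isBigO_exp_sub_expTaylorTwo.comp_tendsto (hu.trans_tendsto hg)).trans (hu.norm_left.pow 3)

lemma Asymptotics.IsBigO.exp_mul_exp_sub_expMulExpTaylorTwo (hg : Tendsto g l (𝓝 0))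
    (hu : u =O[l] g) (hv : v =O[l] g) :
    (fun x => exp (u x) * exp (v x) - expMulExpTaylorTwo (u x) (v x)) =O[l]
      fun x => g x ^ 3 := by
  have hu0 := hu.trans_tendsto hg
  have hv0 := hv.trans_tendsto hg
  have exp_v_bdd : (fun x => exp (v x)) =O[l] fun _ => (1 : ℝ) :=
    ((exp_analytic (𝕂 := ℝ) (0 : A)).continuousAt.tendsto.comp hv0).isBigO_one ℝ
  have taylor_u_bdd : (fun x => expTaylorTwo (u x)) =O[l] fun _ => (1 : ℝ) :=
    (((continuous_const.add continuous_id).add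
      ((continuous_id.mul continuous_id).const_smul _)).tendsto (0 : A) |>.comp hu0).isBigO_one ℝ
  have cube {f₁ f₂ f₃ : α → A} (h₁ : f₁ =O[l] g) (h₂ : f₂ =O[l] g) (h₃ : f₃ =O[l] g) :
      (fun x => f₁ x * (f₂ x * f₃ x)) =O[l] fun x => g x ^ 3 :=
    (h₁.mul (h₂.mul h₃)).congr_right fun x => by ring
  have hvv : (fun x => v x * v x) =O[l] g :=
    (hv.mul (hv0.isBigO_one ℝ)).congr_right fun x => mul_one _
  have tail := (((cube hu hv hv).const_smul_left (1 / 2 : ℝ)).add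
    ((cube hu hu hv).const_smul_left (1 / 2 : ℝ))).add
      ((cube hu hu hvv).const_smul_left (1 / 4 : ℝ))
  have main := ((((hu.exp_sub_expTaylorTwo hg).mul exp_v_bdd).congr_right fun x => mul_one _).add
    ((taylor_u_bdd.mul (hv.exp_sub_expTaylorTwo hg)).congr_right fun x => one_mul _)).add tail
  refine main.congr_left fun x => ?_
  simp only [Pi.smul_apply]
  rw [sub_mul, mul_sub, expTaylorTwo_mul_expTaylorTwo]
  abel

end ExpTaylor

lemma DifferentiableAt.isBigO_norm_of_eq_zero {𝕜 E F : Type*} [NontriviallyNormedField 𝕜]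
    [NormedAddCommGroup E] [NormedSpace 𝕜 E] [NormedAddCommGroup F] [NormedSpace 𝕜 F]
    {f : E → F} (hf : DifferentiableAt 𝕜 f 0) (h0 : f 0 = 0) : f =O[𝓝 0] fun x => ‖x‖ := by
  simpa [h0] using hf.isBigO_sub.norm_right

lemma isBigO_fst_pow_mul_snd_pow_smul {𝕜 E : Type*} [NormedField 𝕜] [NormedAddCommGroup E]
    [NormedSpace 𝕜 E] (i j : ℕ) (C : E) :
    (fun p : 𝕜 × 𝕜 => (p.1 ^ i * p.2 ^ j) • C) =O[𝓝 0] fun p => ‖p‖ ^ (i + j) := by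
  have hfst : (fun p : 𝕜 × 𝕜 => p.1) =O[𝓝 0] fun p => ‖p‖ := isBigO_fst_prod'.norm_right
  have hsnd : (fun p : 𝕜 × 𝕜 => p.2) =O[𝓝 0] fun p => ‖p‖ := isBigO_snd_prod'.norm_right
  exact (((hfst.pow i).mul (hsnd.pow j)).smul (isBigO_const_const C one_ne_zero _)).congr_right
    fun p => by simp [pow_add]

/-- **First-order Baker–Campbell–Hausdorff identity in a Banach algebra.**
Let `A` be a complete unital normed `ℝ`-algebra and `X Y Z : A`.  Then
`exp (t • X) * exp (ε • (Y + t • Z))` agrees with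
`exp (t • X + ε • Y + (t ε) • (Z + ½ [X, Y]))`, where `[X, Y] = X * Y − Y * X`, up to an
error of order `O(‖(t, ε)‖³)` as `(t, ε) → (0, 0)`. -/
theorem bch_first_order
    {A : Type*} [NormedRing A] [NormedAlgebra ℝ A] [CompleteSpace A]
    (X Y Z : A) :
    (fun p : ℝ × ℝ =>
        exp (p.1 • X) * exp (p.2 • (Y + p.1 • Z))
          - exp (p.1 • X + p.2 • Y
              + (p.1 * p.2) • (Z + (1 / 2 : ℝ) • (X * Y - Y * X))))
      =O[𝓝 (0 : ℝ × ℝ)] fun p : ℝ × ℝ => ‖p‖ ^ 3 := by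
  have ha : (fun p : ℝ × ℝ => p.1 • X) =O[𝓝 0] fun p => ‖p‖ :=
    DifferentiableAt.isBigO_norm_of_eq_zero (𝕜 := ℝ) (by fun_prop) (by simp)
  have hb : (fun p : ℝ × ℝ => p.2 • (Y + p.1 • Z)) =O[𝓝 0] fun p => ‖p‖ :=
    DifferentiableAt.isBigO_norm_of_eq_zero (𝕜 := ℝ) (by fun_prop) (by simp)
  have hc : (fun p : ℝ × ℝ => p.1 • X + p.2 • Y
      + (p.1 * p.2) • (Z + (1 / 2 : ℝ) • (X * Y - Y * X))) =O[𝓝 0] fun p => ‖p‖ :=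
    DifferentiableAt.isBigO_norm_of_eq_zero (𝕜 := ℝ) (by fun_prop) (by simp)
  obtain ⟨C₁, C₂, C₃, hdefect⟩ := exists_expMulExpTaylorTwo_sub_expTaylorTwo_eq X Y Z
  have quartic := (isBigO_fst_pow_mul_snd_pow_smul (𝕜 := ℝ) 2 2 C₃).trans
    (isLittleO_norm_pow_norm_pow (by norm_num : 3 < 4)).isBigO
  have defect := ((isBigO_fst_pow_mul_snd_pow_smul 2 1 C₁).add
    (isBigO_fst_pow_mul_snd_pow_smul 1 2 C₂)).add quartic
  refine (((ha.exp_mul_exp_sub_expMulExpTaylorTwo tendsto_norm_zero hb).sub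
    (hc.exp_sub_expTaylorTwo tendsto_norm_zero)).add defect).congr_left fun p => ?_
  simp only [pow_one, ← hdefect]
  abel
end

section
/- Let A be a complete unital normed ℝ-algebra (a Banach algebra) and let X, Y, Z ∈ A. Define u, v : ℝ × ℝ → A by u(t,ε) := exp(ε•X) * exp(t•(Y + ε•Z)) and v(t,ε) := exp(t•Y) * exp(ε•(X + t•(Z + (X*Y − Y*X)))). Then u(t,ε) − v(t,ε) = O(‖(t,ε)‖³) as (t,ε) → (0,0); in particular u and v have the same value, the same first-order partial derivatives and the same mixed second partial derivative ∂²/∂t∂ε at (0,0). -/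
open scoped Topology
open Asymptotics NormedSpace Filter

/-!
To second order the Baker–Campbell–Hausdorff formula reads
`exp a * exp b = exp (a + b + ½[a, b]) + O(g³)` whenever `a, b = O(g)` with `g → 0`; both sides
agree with products of the Taylor polynomials `1 + w + w²/2` up to products of three small
factors. As `exp` has a strict derivative at `0`, it is Lipschitz there, so two products of
exponentials agree to third order once their second-order BCH logarithms do. For `u` and `v` both
logarithms are `εX + tY + tεZ + ½tε[X, Y]` up to `tε²` and `t²ε` terms: replacing `Z` by
`Z + [X, Y]` is exactly what makes the `tε` terms match.
-/

section Algebra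

variable {A : Type*} [Ring A] [Algebra ℝ A]

noncomputable def expTaylor2 (w : A) : A := 1 + w + (2⁻¹ : ℝ) • (w * w)

noncomputable def bch2 (a b : A) : A := a + b + (2⁻¹ : ℝ) • (a * b - b * a)

-- Every term on the right is a product of at least three factors that are small with `a, b`.
theorem expTaylor2_mul_expTaylor2_sub_expTaylor2_bch2 (a b : A) :
    expTaylor2 a * expTaylor2 b - expTaylor2 (bch2 a b) =
      (2⁻¹ : ℝ) • (a * a * b) + (2⁻¹ : ℝ) • (a * (1 + (2⁻¹ : ℝ) • a) * (b * b))
        - (2⁻¹ : ℝ) • ((a + b) * ((2⁻¹ : ℝ) • (a * b - b * a))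
          + (2⁻¹ : ℝ) • (a * b - b * a) * bch2 a b) := by
  simp only [expTaylor2, bch2, mul_add, add_mul, mul_sub, sub_mul, smul_add, smul_sub,
    smul_mul_assoc, mul_smul_comm, smul_smul, mul_assoc, one_mul, mul_one]
  module

theorem bch2_sub_bch2_thetaInvolution (X Y Z : A) (t ε : ℝ) :
    bch2 (ε • X) (t • (Y + ε • Z)) - bch2 (t • Y) (ε • (X + t • (Z + (X * Y - Y * X)))) =
      (t * ε ^ 2) • ((2⁻¹ : ℝ) • (X * Z - Z * X))
        - (t ^ 2 * ε) • ((2⁻¹ : ℝ) •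
            (Y * (Z + (X * Y - Y * X)) - (Z + (X * Y - Y * X)) * Y)) := by
  simp only [bch2, mul_add, add_mul, mul_sub, sub_mul, smul_add, smul_sub,
    smul_mul_assoc, mul_smul_comm, smul_smul, mul_assoc]
  module

end Algebra

namespace Asymptotics

variable {α R : Type*} [NormedRing R] {l : Filter α} {g : α → ℝ}

theorem IsBigO.mul_sub_mul {u₁ u₂ v₁ v₂ : α → R} {k : α → ℝ}
    (hu₁ : u₁ =O[l] fun _ => (1 : ℝ)) (hv₂ : v₂ =O[l] fun _ => (1 : ℝ))
    (h₁ : (fun x => u₁ x - v₁ x) =O[l] k) (h₂ : (fun x => u₂ x - v₂ x) =O[l] k) :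
    (fun x => u₁ x * u₂ x - v₁ x * v₂ x) =O[l] k := by
  refine (((hu₁.mul h₂).congr_right fun x => one_mul (k x)).add
    ((h₁.mul hv₂).congr_right fun x => mul_one (k x))).congr_left fun x => ?_
  noncomm_ring

theorem IsBigO.smul_isBigO_one [NormedAlgebra ℝ R] {f : α → ℝ} {v : α → R}
    (hf : f =O[l] g) (hv : v =O[l] fun _ => (1 : ℝ)) : (fun x => f x • v x) =O[l] g :=
  (hf.smul hv).congr_right fun _ => by simp

end Asymptotics

section NormedAlgebra

variable {α A : Type*} [NormedRing A] [NormedAlgebra ℝ A] {l : Filter α} {g : α → ℝ}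

theorem continuous_expTaylor2 : Continuous (expTaylor2 : A → A) := by
  unfold expTaylor2; fun_prop

theorem Asymptotics.IsBigO.bch2 {a b : α → A} (ha : a =O[l] g) (hb : b =O[l] g)
    (hg : Tendsto g l (𝓝 0)) : (fun x => bch2 (a x) (b x)) =O[l] g := by
  have ha1 : a =O[l] fun _ => (1 : ℝ) := ha.trans (hg.isBigO_one ℝ)
  have hb1 : b =O[l] fun _ => (1 : ℝ) := hb.trans (hg.isBigO_one ℝ)
  have hcomm := ((ha.mul hb1).sub (hb.mul ha1)).const_smul_left (2⁻¹ : ℝ)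
  exact (ha.add hb).add (hcomm.congr_right fun x => mul_one (g x))

theorem isBigO_expTaylor2_mul_sub_expTaylor2_bch2 {a b : α → A} (ha : a =O[l] g)
    (hb : b =O[l] g) (hg : Tendsto g l (𝓝 0)) :
    (fun x => expTaylor2 (a x) * expTaylor2 (b x) - expTaylor2 (bch2 (a x) (b x)))
      =O[l] fun x => g x ^ 3 := by
  have hcomm : (fun x => (2⁻¹ : ℝ) • (a x * b x - b x * a x)) =O[l] fun x => g x * g x :=
    ((ha.mul hb).sub (hb.mul ha)).const_smul_left (2⁻¹ : ℝ)
  have ha1 : (fun x => 1 + (2⁻¹ : ℝ) • a x) =O[l] fun _ => (1 : ℝ) :=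
    ((show Continuous fun w : A => 1 + (2⁻¹ : ℝ) • w by fun_prop).tendsto 0).comp
      (ha.trans_tendsto hg) |>.isBigO_one ℝ
  have h₁ : (fun x => a x * a x * b x) =O[l] fun x => g x ^ 3 :=
    ((ha.mul ha).mul hb).congr_right fun _ => by ring
  have h₂ : (fun x => a x * (1 + (2⁻¹ : ℝ) • a x) * (b x * b x)) =O[l] fun x => g x ^ 3 :=
    ((ha.mul ha1).mul (hb.mul hb)).congr_right fun _ => by ring
  have h₃ : (fun x => (a x + b x) * ((2⁻¹ : ℝ) • (a x * b x - b x * a x)))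
      =O[l] fun x => g x ^ 3 :=
    ((ha.add hb).mul hcomm).congr_right fun _ => by ring
  have h₄ : (fun x => (2⁻¹ : ℝ) • (a x * b x - b x * a x) * bch2 (a x) (b x))
      =O[l] fun x => g x ^ 3 :=
    (hcomm.mul (ha.bch2 hb hg)).congr_right fun _ => by ring
  simp only [expTaylor2_mul_expTaylor2_sub_expTaylor2_bch2]
  exact ((h₁.const_smul_left (2⁻¹ : ℝ)).add (h₂.const_smul_left (2⁻¹ : ℝ))).sub
    ((h₃.add h₄).const_smul_left (2⁻¹ : ℝ))

end NormedAlgebra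

section Exponential

variable {α A : Type*} [NormedRing A] [NormedAlgebra ℝ A] [CompleteSpace A]
  {l : Filter α} {g : α → ℝ}

theorem isBigO_exp_sub_expTaylor2 :
    (fun w : A => exp w - expTaylor2 w) =O[𝓝 0] fun w => ‖w‖ ^ 3 := by
  have h := (exp_hasFPowerSeriesAt_zero (𝕂 := ℝ) (𝔸 := A)).isBigO_sub_partialSum_pow 3
  simp only [zero_add] at h
  refine h.congr_left fun w => ?_
  simp [FormalMultilinearSeries.partialSum, Finset.sum_range_succ, expSeries_apply_eq,
    expTaylor2, Nat.factorial, pow_two]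

theorem Asymptotics.IsBigO.exp_sub_expTaylor2 {w : α → A} (hw : w =O[l] g)
    (hg : Tendsto g l (𝓝 0)) :
    (fun x => exp (w x) - expTaylor2 (w x)) =O[l] fun x => g x ^ 3 :=
  (isBigO_exp_sub_expTaylor2.comp_tendsto (hw.trans_tendsto hg)).trans (hw.norm_left.pow 3)

theorem isBigO_exp_mul_exp_sub_exp_bch2 {a b : α → A} (ha : a =O[l] g) (hb : b =O[l] g)
    (hg : Tendsto g l (𝓝 0)) :
    (fun x => exp (a x) * exp (b x) - exp (bch2 (a x) (b x))) =O[l] fun x => g x ^ 3 := by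
  have hexp_a : (fun x => exp (a x)) =O[l] fun _ => (1 : ℝ) :=
    ((hasStrictFDerivAt_exp_zero (𝕂 := ℝ)).continuousAt.tendsto.comp
      (ha.trans_tendsto hg)).isBigO_one ℝ
  have hT_b : (fun x => expTaylor2 (b x)) =O[l] fun _ => (1 : ℝ) :=
    ((continuous_expTaylor2.tendsto 0).comp (hb.trans_tendsto hg)).isBigO_one ℝ
  have hprod := hexp_a.mul_sub_mul hT_b (ha.exp_sub_expTaylor2 hg) (hb.exp_sub_expTaylor2 hg)
  refine ((hprod.add (isBigO_expTaylor2_mul_sub_expTaylor2_bch2 ha hb hg)).sub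
    ((ha.bch2 hb hg).exp_sub_expTaylor2 hg)).congr_left fun x => ?_
  abel

theorem isBigO_exp_sub_exp {w₁ w₂ : α → A} (h₁ : Tendsto w₁ l (𝓝 0))
    (h₂ : Tendsto w₂ l (𝓝 0)) :
    (fun x => exp (w₁ x) - exp (w₂ x)) =O[l] fun x => w₁ x - w₂ x :=
  (hasStrictFDerivAt_exp_zero (𝕂 := ℝ)).isBigO_sub.comp_tendsto (h₁.prodMk_nhds h₂)

theorem isBigO_exp_mul_exp_sub_exp_mul_exp {a b c d : α → A} (ha : a =O[l] g)
    (hb : b =O[l] g) (hc : c =O[l] g) (hd : d =O[l] g) (hg : Tendsto g l (𝓝 0))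
    (hbch : (fun x => bch2 (a x) (b x) - bch2 (c x) (d x)) =O[l] fun x => g x ^ 3) :
    (fun x => exp (a x) * exp (b x) - exp (c x) * exp (d x)) =O[l] fun x => g x ^ 3 := by
  have hexp := (isBigO_exp_sub_exp ((ha.bch2 hb hg).trans_tendsto hg)
    ((hc.bch2 hd hg).trans_tendsto hg)).trans hbch
  refine (((isBigO_exp_mul_exp_sub_exp_bch2 ha hb hg).add hexp).sub
    (isBigO_exp_mul_exp_sub_exp_bch2 hc hd hg)).congr_left fun x => ?_
  abel

end Exponential

/-- **The canonical involution of the second tangent bundle via BCH.**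
Let `A` be a complete unital normed `ℝ`-algebra and `X Y Z : A`.  Then
`u (t, ε) = exp (ε • X) * exp (t • (Y + ε • Z))` and
`v (t, ε) = exp (t • Y) * exp (ε • (X + t • (Z + [X, Y])))`, where `[X, Y] = X * Y − Y * X`,
agree up to `O(‖(t, ε)‖³)` as `(t, ε) → (0, 0)`; in particular they have the same value, the
same first-order partials and the same mixed second partial at `(0, 0)`.  This is the analytic
content of `Θ (g, X; Y, Z) = (g, Y; X, Z + [X, Y])`. -/
theorem theta_involution_bch
    {A : Type*} [NormedRing A] [NormedAlgebra ℝ A] [CompleteSpace A]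
    (X Y Z : A) :
    (fun p : ℝ × ℝ =>
        exp (p.2 • X) * exp (p.1 • (Y + p.2 • Z))
          - exp (p.1 • Y) * exp (p.2 • (X + p.1 • (Z + (X * Y - Y * X)))))
      =O[𝓝 (0 : ℝ × ℝ)] fun p : ℝ × ℝ => ‖p‖ ^ 3 := by
  have ht : (fun p : ℝ × ℝ => p.1) =O[𝓝 0] fun p => ‖p‖ := isBigO_fst_prod'.norm_right
  have hε : (fun p : ℝ × ℝ => p.2) =O[𝓝 0] fun p => ‖p‖ := isBigO_snd_prod'.norm_right
  have hbdd : ∀ v : ℝ × ℝ → A, Continuous v → v =O[𝓝 0] fun _ => (1 : ℝ) :=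
    fun v hv => (hv.tendsto 0).isBigO_one ℝ
  have ht_sq_ε : (fun p : ℝ × ℝ => p.1 ^ 2 * p.2) =O[𝓝 0] fun p => ‖p‖ ^ 3 :=
    ((ht.mul ht).mul hε).congr (fun _ => by ring) fun _ => by ring
  have ht_ε_sq : (fun p : ℝ × ℝ => p.1 * p.2 ^ 2) =O[𝓝 0] fun p => ‖p‖ ^ 3 :=
    ((ht.mul hε).mul hε).congr (fun _ => by ring) fun _ => by ring
  refine isBigO_exp_mul_exp_sub_exp_mul_exp (hε.smul_isBigO_one (hbdd _ continuous_const))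
    (ht.smul_isBigO_one (hbdd _ (by fun_prop))) (ht.smul_isBigO_one (hbdd _ continuous_const))
    (hε.smul_isBigO_one (hbdd _ (by fun_prop))) tendsto_norm_zero ?_
  simp only [bch2_sub_bch2_thetaInvolution]
  exact (ht_ε_sq.smul_isBigO_one (hbdd _ continuous_const)).sub
    (ht_sq_ε.smul_isBigO_one (hbdd _ continuous_const))
end
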